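/- For every μ ∈ M(Σ_D) (not necessarily ergodic), μ(A_0 ∪ A_α ∪ A_β) = 1; that is, every shift-invariant Borel probability measure on Σ_D gives zero measure to the complement Σ_D \ (A_0 ∪ A_α ∪ A_β). -/

import Mathlib

open MeasureTheory Topology Filter
open scoped ENNReal NNReal


/-! ### The alphabet of the (M,N) Dyck–Motzkin shift -/

/-- The alphabet `D = D_α ∪ D_0 ∪ D_β` of the `(M,N)` Dyck–Motzkin shift:
`la k` is the left bracket `α_k`, `u k` is the unit `1_k`, `ra k` is the right bracket `β_k`. -/
inductive DMSym (M N : ℕ) : Type where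
  | la : Fin M → DMSym M N
  | u  : Fin N → DMSym M N
  | ra : Fin M → DMSym M N
deriving DecidableEq

namespace DMSym

def equivSum (M N : ℕ) : DMSym M N ≃ (Fin M ⊕ Fin N ⊕ Fin M) where
  toFun s := match s with
    | .la k => Sum.inl k
    | .u k => Sum.inr (Sum.inl k)
    | .ra k => Sum.inr (Sum.inr k)
  invFun s := match s with
    | Sum.inl k => .la k
    | Sum.inr (Sum.inl k) => .u k
    | Sum.inr (Sum.inr k) => .ra k
  left_inv s := by cases s <;> rfl
  right_inv s := by rcases s with k | k | k <;> rfl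

instance (M N : ℕ) : Fintype (DMSym M N) := Fintype.ofEquiv _ (equivSum M N).symm
instance (M N : ℕ) : TopologicalSpace (DMSym M N) := ⊥
instance (M N : ℕ) : DiscreteTopology (DMSym M N) := ⟨rfl⟩
instance (M N : ℕ) : MeasurableSpace (DMSym M N) := ⊤
instance (M N : ℕ) : BorelSpace (DMSym M N) := ⟨borel_eq_top_of_discrete.symm⟩

end DMSym

/-- Nonzero elements of the Dyck–Motzkin monoid with zero are represented in normal form:
`some (bs, as)` is the reduced word `β_{bs(0)} ⋯ β_{bs(r)} α_{as(0)} ⋯ α_{as(s)}`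
(in particular `some ([], [])` is the unit element `1`); `none` is the zero element `0`. -/
abbrev DyckElem (M : ℕ) := Option (List (Fin M) × List (Fin M))

/-- Multiplication, in the Dyck–Motzkin monoid with zero, of an element in normal form on
the right by a generator: units are absorbed, a left bracket is appended, and a right bracket
either closes the last left bracket (if the indices match), is appended (if there is no left
bracket to close), or produces the zero element (if the indices do not match). -/
def dyckStep {M N : ℕ} : DyckElem M → DMSym M N → DyckElem M
  | none, _ => none
  | some (bs, as), .la k => some (bs, as ++ [k])
  | some (bs, as), .u _ => some (bs, as)
  | some (bs, as), .ra k =>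
      match as.getLast? with
      | none => some (bs ++ [k], [])
      | some j => if j = k then some (bs, as.dropLast) else none

/-- `red w` is the image of the word `w` in the Dyck–Motzkin monoid with zero. -/
def red {M N : ℕ} (w : List (DMSym M N)) : DyckElem M :=
  w.foldl dyckStep (some ([], []))

/-- The word `x_j x_{j+1} ⋯ x_k` read off a bi-infinite sequence `x`. -/
def wordAt {M N : ℕ} (x : ℤ → DMSym M N) (j k : ℤ) : List (DMSym M N) :=
  (List.range (k + 1 - j).toNat).map fun n => x (j + n)

/-- The `(M,N)` Dyck–Motzkin shift `Σ_D`. -/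
def SigmaD (M N : ℕ) : Set (ℤ → DMSym M N) :=
  {x | ∀ j k : ℤ, j < k → red (wordAt x j k) ≠ none}

/-- The left shift `σ`. -/
def shift {A : Type*} : (ℤ → A) → (ℤ → A) := fun x i => x (i + 1)

/-- The inverse `σ⁻¹` of the left shift. -/
def shiftInv {A : Type*} : (ℤ → A) → (ℤ → A) := fun x i => x (i - 1)

lemma wordAt_shift {M N : ℕ} (x : ℤ → DMSym M N) (j k : ℤ) :
    wordAt (shift x) j k = wordAt x (j + 1) (k + 1) := by
  simp only [wordAt, shift]
  rw [show (k + 1 + 1 - (j + 1) : ℤ) = k + 1 - j by ring]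
  exact List.map_congr_left fun n _ => by rw [show (j + n + 1 : ℤ) = j + 1 + n by ring]

lemma shift_mem_SigmaD {M N : ℕ} {x : ℤ → DMSym M N} (hx : x ∈ SigmaD M N) :
    shift x ∈ SigmaD M N := by
  intro j k hjk
  rw [wordAt_shift]
  exact hx (j + 1) (k + 1) (by omega)

/-- The left shift acting on `Σ_D`. -/
def shiftD (M N : ℕ) : ↥(SigmaD M N) → ↥(SigmaD M N) :=
  fun x => ⟨shift x.val, shift_mem_SigmaD x.property⟩

section Generic
variable {X : Type*} [MeasurableSpace X]

/-- The set of `T`-invariant Borel probability measures. -/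
def InvMeas (T : X → X) : Set (ProbabilityMeasure X) :=
  {μ | MeasurePreserving T μ.toMeasure μ.toMeasure}

/-- The set of `T`-invariant ergodic Borel probability measures. -/
def ErgMeas (T : X → X) : Set (ProbabilityMeasure X) :=
  {μ | Ergodic T μ.toMeasure}

/-- A `CO`-measure: an invariant ergodic probability measure supported on the orbit of a
single periodic point. -/
def IsCOMeas (T : X → X) (μ : ProbabilityMeasure X) : Prop :=
  Ergodic T μ.toMeasure ∧
    ∃ (x : X) (n : ℕ), 0 < n ∧ T^[n] x = x ∧
      μ.toMeasure {y | ∃ k : ℕ, y = T^[k] x} = 1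

/-- Convexity for a set of probability measures: it is stable under taking the convex
combination `t•μ + (1-t)•ν` of any two of its members. -/
def ConvexMeasSet (U : Set (ProbabilityMeasure X)) : Prop :=
  ∀ μ ∈ U, ∀ ν ∈ U, ∀ t : ℝ≥0∞, t ≤ 1 → ∀ ρ : ProbabilityMeasure X,
    ρ.toMeasure = t • μ.toMeasure + (1 - t) • ν.toMeasure → ρ ∈ U

/-- A measure is fully supported if it gives positive measure to every non-empty open set. -/
def FullSupp [TopologicalSpace X] (μ : ProbabilityMeasure X) : Prop :=
  ∀ U : Set X, IsOpen U → U.Nonempty → 0 < μ.toMeasure U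

/-- Measure-theoretic isomorphism of the measure-preserving systems `(X,T,μ)` and `(Y,S,ν)`. -/
def MeasureIso {Y : Type*} [MeasurableSpace Y] (T : X → X) (S : Y → Y)
    (μ : Measure X) (ν : Measure Y) : Prop :=
  ∃ (φ : X → Y) (ψ : Y → X), Measurable φ ∧ Measurable ψ ∧
    Measure.map φ μ = ν ∧ Measure.map ψ ν = μ ∧
    (∀ᵐ x ∂μ, ψ (φ x) = x) ∧ (∀ᵐ y ∂ν, φ (ψ y) = y) ∧
    (∀ᵐ x ∂μ, φ (T x) = S (φ x))

/-- The system `(X,T,μ)` is Bernoulli: it is measure-theoretically isomorphic to a two-sided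
Bernoulli shift, i.e. the left shift on `ℤ → ℕ` equipped with an i.i.d. product measure
(determined by requiring that the measures of all cylinder sets factorize according to a
fixed distribution `p`). -/
def IsBernoulli (T : X → X) (μ : Measure X) : Prop :=
  ∃ (p : ℕ → ℝ≥0∞) (ν : Measure (ℤ → ℕ)), (∑' n, p n) = 1 ∧
    IsProbabilityMeasure ν ∧
    (∀ (n : ℕ) (w : Fin n → ℕ) (j : ℤ),
      ν {y | ∀ i : Fin n, y (j + (i : ℕ)) = w i} = ∏ i, p (w i)) ∧
    MeasureIso T shift μ ν

end Generic

/-- `M(Σ_D)`: the space of shift-invariant Borel probability measures on `Σ_D`,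
endowed with the weak* topology. -/
def MinvD (M N : ℕ) : Set (ProbabilityMeasure ↥(SigmaD M N)) := InvMeas (shiftD M N)

/-- `M^e(Σ_D)`: the shift-invariant ergodic Borel probability measures on `Σ_D`. -/
def MergD (M N : ℕ) : Set (ProbabilityMeasure ↥(SigmaD M N)) := ErgMeas (shiftD M N)

/-- The integral `∫ f dμ`. -/
noncomputable def intCf {M N : ℕ} (f : C(↥(SigmaD M N), ℝ))
    (μ : ProbabilityMeasure ↥(SigmaD M N)) : ℝ := ∫ x, f x ∂μ.toMeasure

/-- `M_max(f)`: the set of `f`-maximizing measures, i.e. the shift-invariant measures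
attaining `sup { ∫ f dν : ν ∈ M(Σ_D) }`. -/
def Mmax (M N : ℕ) (f : C(↥(SigmaD M N), ℝ)) : Set (ProbabilityMeasure ↥(SigmaD M N)) :=
  {μ ∈ MinvD M N | ∀ ν ∈ MinvD M N, intCf f ν ≤ intCf f μ}

/-- `G_j(x)`: `1` on left brackets, `-1` on right brackets, `0` on units. -/
def Gfun {M N : ℕ} (x : ℤ → DMSym M N) (j : ℤ) : ℤ :=
  match x j with
  | .la _ => 1
  | .u _ => 0
  | .ra _ => -1

/-- `H_i(x) = Σ_{j=0}^{i-1} G_j(x)` for `i ≥ 1`, `H_i(x) = -Σ_{j=i}^{-1} G_j(x)` for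
`i ≤ -1`, and `H_0(x) = 0`. -/
def Hfun {M N : ℕ} (x : ℤ → DMSym M N) (i : ℤ) : ℤ :=
  if 0 ≤ i then ∑ j ∈ Finset.range i.toNat, Gfun x (j : ℤ)
  else -∑ j ∈ Finset.range (-i).toNat, Gfun x (i + (j : ℤ))

/-- The set `A_0`. -/
def A0set (M N : ℕ) : Set (ℤ → DMSym M N) :=
  SigmaD M N ∩ {x | ∀ i : ℤ,
    (∃ j : ℕ, 1 ≤ j ∧ Hfun x (i + (j : ℤ)) = Hfun x i) ∧
    (∃ j : ℕ, 1 ≤ j ∧ Hfun x (i - (j : ℤ)) = Hfun x i)}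

/-- The set `A_α`. -/
def AalphaSet (M N : ℕ) : Set (ℤ → DMSym M N) :=
  SigmaD M N ∩ {x | Tendsto (Hfun x) atTop atTop ∧ Tendsto (Hfun x) atBot atBot}

/-- The set `A_β`. -/
def AbetaSet (M N : ℕ) : Set (ℤ → DMSym M N) :=
  SigmaD M N ∩ {x | Tendsto (Hfun x) atTop atBot ∧ Tendsto (Hfun x) atBot atTop}

/-!
View the height `H` as an integer cocycle over the shift, with steps in `{-1, 0, 1}`.

* Poincaré recurrence: a walk that never returns to its starting level stays on one side of it,
  and its returns to the set of such points are strict future minima, so it tends to `±∞`.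
* The last time at which a walk attains its global minimum is a wandering set, so a.e. the walk
  does not tend to `+∞` at both ends.
* The first return to the starting level, at time `n`, maps the points whose first forward return
  happens at time `n` onto those whose first backward return happens at time `n`. So on an
  invariant set, never returning in the future and never returning in the past have equal
  measure. On the invariant set where `H → +∞` forwards but not `H → -∞` backwards, the latter
  is null by the first two points, while every orbit meets the former at a last visit of a level;
  so that set is null.

Negating the walk and reversing time give the remaining cases.
-/

theorem Int.tendsto_add_sub_iff {f : ℤ → ℤ} (i c : ℤ) {l₁ l₂ : Filter ℤ}
    (h₁ : l₁ = atTop ∨ l₁ = atBot) (h₂ : l₂ = atTop ∨ l₂ = atBot) :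
    Tendsto (fun k => f (i + k) - c) l₁ l₂ ↔ Tendsto f l₁ l₂ := by
  have hsrc : Tendsto (fun k => f (i + k)) l₁ l₂ ↔ Tendsto f l₁ l₂ := by
    refine (tendsto_map'_iff (g := OrderIso.addLeft i)).symm.trans ?_
    rcases h₁ with rfl | rfl
    · rw [OrderIso.map_atTop]
    · rw [OrderIso.map_atBot]
  refine Iff.trans ?_ hsrc
  rcases h₂ with rfl | rfl
  · exact (OrderIso.subRight c).tendsto_atTop_iff
  · exact (OrderIso.subRight c).tendsto_atBot_iff

theorem Int.exists_forall_lt_of_tendsto_atTop {f : ℤ → ℤ} (hf : Tendsto f atTop atTop) (a : ℤ) :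
    ∃ i, a ≤ i ∧ f i ≤ f a ∧ ∀ k, i < k → f i < f k := by
  obtain ⟨N, hN⟩ := eventually_atTop.1 (hf.eventually_gt_atTop (f a))
  obtain ⟨i, ⟨hai, hi⟩, hmax⟩ := Int.exists_greatest_of_bdd (P := fun z => a ≤ z ∧ f z ≤ f a)
    ⟨N, fun z hz => by by_contra h; have := hN z (by omega); omega⟩ ⟨a, le_rfl, le_rfl⟩
  refine ⟨i, hai, hi, fun k hk => ?_⟩
  by_contra h
  have := hmax k ⟨by omega, by omega⟩
  omega

theorem forall_pos_or_forall_neg_of_ne_zero {s : ℕ → ℤ} (hs : ∀ n, |s (n + 1) - s n| ≤ 1)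
    (h : ∀ n, 0 < n → s n ≠ 0) : (∀ n, 0 < n → 0 < s n) ∨ (∀ n, 0 < n → s n < 0) := by
  have key : ∀ n, 0 < n → (0 < s 1 ↔ 0 < s n) := by
    intro n hn
    induction n, hn using Nat.le_induction with
    | base => rfl
    | succ n hn ih =>
      have := abs_le.1 (hs n)
      have := h n hn
      have := h (n + 1) (by omega)
      omega
  rcases (h 1 one_pos).lt_or_gt with h1 | h1
  · exact .inr fun n hn => by have := key n hn; have := h n hn; omega
  · exact .inl fun n hn => (key n hn).1 h1

def IsFirstZero (s : ℕ → ℤ) (n : ℕ) : Prop :=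
  0 < n ∧ s n = 0 ∧ ∀ j, 0 < j → j < n → s j ≠ 0

theorem IsFirstZero.unique {s : ℕ → ℤ} {m n : ℕ} (hm : IsFirstZero s m) (hn : IsFirstZero s n) :
    m = n := by
  rcases lt_trichotomy m n with h | h | h
  · exact absurd hm.2.1 (hn.2.2 m hm.1 h)
  · exact h
  · exact absurd hn.2.1 (hm.2.2 n hn.1 h)

theorem exists_isFirstZero {s : ℕ → ℤ} (h : ∃ n, 0 < n ∧ s n = 0) : ∃ n, IsFirstZero s n := by
  classical
  exact ⟨Nat.find h, (Nat.find_spec h).1, (Nat.find_spec h).2,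
    fun j hj hjn hs => Nat.find_min h hjn ⟨hj, hs⟩⟩

theorem isFirstZero_reverse_iff {s : ℤ → ℤ} (h0 : s 0 = 0) {n : ℕ} :
    IsFirstZero (fun j : ℕ => s (n + -(j : ℤ)) - s n) n ↔ IsFirstZero (fun j : ℕ => s j) n := by
  simp only [IsFirstZero, add_neg_cancel, h0, zero_sub, neg_eq_zero]
  refine and_congr_right fun hn => and_congr_right fun hsn =>
    ⟨fun h j hj hjn => ?_, fun h j hj hjn => ?_⟩
  · have := h (n - j) (by omega) (by omega)
    rwa [show (n : ℤ) + -((n - j : ℕ) : ℤ) = j by omega, hsn, sub_zero] at this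
  · rw [hsn, sub_zero, show (n : ℤ) + -(j : ℤ) = ((n - j : ℕ) : ℤ) by omega]
    exact h (n - j) (by omega) (by omega)

section

variable {X : Type*} [MeasurableSpace X] {μ : Measure X}

theorem MeasureTheory.MeasurePreserving.zpow {T : X ≃ᵐ X} (hT : MeasurePreserving T μ μ)
    (i : ℤ) : MeasurePreserving ⇑(T.toEquiv ^ i) μ μ := by
  obtain ⟨n, rfl | rfl⟩ := Int.eq_nat_or_neg i
  · simpa [Equiv.Perm.coe_pow] using hT.iterate n
  · simpa [Equiv.Perm.coe_pow, ← inv_pow] using (hT.symm T).iterate n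

theorem MeasureTheory.MeasurePreserving.ae_forall_zpow {T : X ≃ᵐ X}
    (hT : MeasurePreserving T μ μ) {P : X → Prop} (h : ∀ᵐ x ∂μ, P x) :
    ∀ᵐ x ∂μ, ∀ i : ℤ, P ((T.toEquiv ^ i) x) :=
  ae_all_iff.2 fun i => (hT.zpow i).quasiMeasurePreserving.ae h

theorem measure_inter_exists_eq_tsum {s : X → ℕ → ℤ} (hs : ∀ n, Measurable fun x => s x n)
    {C : Set X} (hC : MeasurableSet C) :
    μ (C ∩ {x | ∃ n, 0 < n ∧ s x n = 0}) = ∑' n, μ (C ∩ {x | IsFirstZero (s x) n}) := by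
  have hU : C ∩ {x | ∃ n, 0 < n ∧ s x n = 0} = ⋃ n, C ∩ {x | IsFirstZero (s x) n} := by
    ext x
    simp only [Set.mem_inter_iff, Set.mem_ofPred_eq, Set.mem_iUnion]
    exact ⟨fun ⟨hx, h⟩ => (exists_isFirstZero h).imp fun _ hn => ⟨hx, hn⟩,
      fun ⟨n, hx, hn⟩ => ⟨hx, n, hn.1, hn.2.1⟩⟩
  rw [hU, measure_iUnion]
  · exact fun m n hmn => Set.disjoint_left.2 fun x hm hn => hmn (hm.2.unique hn.2)
  · intro n
    simp only [IsFirstZero]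
    measurability

structure IsWalkCocycle (T : X ≃ᵐ X) (H : X → ℤ → ℤ) : Prop where
  apply_zero : ∀ x, H x 0 = 0
  abs_sub_le_one : ∀ x k, |H x (k + 1) - H x k| ≤ 1
  map_apply : ∀ x k, H (T x) k = H x (k + 1) - H x 1
  measurable : ∀ k, Measurable fun x => H x k

namespace IsWalkCocycle

variable {T : X ≃ᵐ X} {H : X → ℤ → ℤ}

theorem symm_apply (hH : IsWalkCocycle T H) (x : X) (k : ℤ) :
    H (T.symm x) k = H x (k - 1) - H x (-1) := by
  have h₁ := hH.map_apply (T.symm x) (k - 1)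
  have h₂ := hH.map_apply (T.symm x) (-1)
  simp only [MeasurableEquiv.apply_symm_apply, sub_add_cancel, neg_add_cancel, hH.apply_zero]
    at h₁ h₂
  omega

theorem neg (hH : IsWalkCocycle T H) : IsWalkCocycle T fun x k => -H x k where
  apply_zero x := by simp [hH.apply_zero]
  abs_sub_le_one x k := by
    rw [← abs_neg, neg_sub_neg, neg_sub]
    exact hH.abs_sub_le_one x k
  map_apply x k := by rw [hH.map_apply]; ring
  measurable k := (hH.measurable k).neg

theorem reverse (hH : IsWalkCocycle T H) : IsWalkCocycle T.symm fun x k => H x (-k) where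
  apply_zero x := by simp [hH.apply_zero]
  abs_sub_le_one x k := by
    simpa [abs_sub_comm, show -(k + 1) + 1 = -k by ring] using hH.abs_sub_le_one x (-(k + 1))
  map_apply x k := by rw [hH.symm_apply]; ring_nf
  measurable k := hH.measurable (-k)

theorem zpow_apply (hH : IsWalkCocycle T H) (i : ℤ) (x : X) (k : ℤ) :
    H ((T.toEquiv ^ i) x) k = H x (i + k) - H x i := by
  induction i using Int.induction_on generalizing x k with
  | zero => simp [hH.apply_zero]
  | succ i ih =>
    rw [zpow_add_one, Equiv.Perm.mul_apply, ih, MeasurableEquiv.coe_toEquiv, hH.map_apply,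
      hH.map_apply]
    ring_nf
  | pred i ih =>
    rw [zpow_sub_one, Equiv.Perm.mul_apply, ih, Equiv.Perm.inv_def,
      MeasurableEquiv.coe_toEquiv_symm, hH.symm_apply, hH.symm_apply]
    ring_nf

theorem iterate_apply (hH : IsWalkCocycle T H) (n : ℕ) (x : X) (k : ℤ) :
    H (T^[n] x) k = H x (n + k) - H x n := by
  rw [← hH.zpow_apply n, zpow_natCast, Equiv.Perm.coe_pow, MeasurableEquiv.coe_toEquiv]

variable [IsFiniteMeasure μ]

theorem ae_tendsto_atTop_of_forall_pos (hT : MeasurePreserving T μ μ) (hH : IsWalkCocycle T H) :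
    ∀ᵐ x ∂μ, (∀ n : ℕ, 0 < n → 0 < H x n) → Tendsto (H x) atTop atTop := by
  have hW : MeasurableSet {x | ∀ n : ℕ, 0 < n → 0 < H x n} := by
    have := hH.measurable
    measurability
  filter_upwards [hT.conservative.ae_mem_imp_frequently_image_mem hW.nullMeasurableSet]
    with x hrec hx
  -- every return time to the set is a strict future minimum of the walk
  have high : ∀ K : ℕ, ∃ n : ℕ, (∀ j : ℕ, 0 < j → 0 < H (T^[n] x) j) ∧ (K : ℤ) ≤ H x n := by
    intro K
    induction K with
    | zero => exact ⟨0, hx, by simp [hH.apply_zero]⟩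
    | succ K ih =>
      obtain ⟨n, hn, hK⟩ := ih
      obtain ⟨m, hm, hnm⟩ := ((hrec hx).and_eventually (eventually_gt_atTop n)).exists
      refine ⟨m, hm, ?_⟩
      have := hn (m - n) (by omega)
      rw [hH.iterate_apply, show (n : ℤ) + ((m - n : ℕ) : ℤ) = m by omega] at this
      push_cast
      omega
  refine tendsto_atTop.2 fun b => ?_
  obtain ⟨n, hn, hb⟩ := high b.toNat
  filter_upwards [eventually_gt_atTop (n : ℤ)] with k hk
  have := hn (k - n).toNat (by omega)
  rw [hH.iterate_apply, show (n : ℤ) + ((k - n).toNat : ℤ) = k by omega] at this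
  omega

theorem ae_tendsto_of_forall_ne (hT : MeasurePreserving T μ μ) (hH : IsWalkCocycle T H) :
    ∀ᵐ x ∂μ, (∀ n : ℕ, 0 < n → H x n ≠ 0) →
      Tendsto (H x) atTop atTop ∨ Tendsto (H x) atTop atBot := by
  filter_upwards [ae_tendsto_atTop_of_forall_pos hT hH, ae_tendsto_atTop_of_forall_pos hT hH.neg]
    with x hpos hneg hne
  rcases forall_pos_or_forall_neg_of_ne_zero (s := fun n : ℕ => H x n)
    (fun n => by push_cast; exact hH.abs_sub_le_one x n) hne with h | h
  · exact .inl (hpos h)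
  · exact .inr (tendsto_neg_atTop_iff.1 (hneg fun n hn => neg_pos.2 (h n hn)))

theorem ae_forall_tendsto_of_forall_ne (hT : MeasurePreserving T μ μ) (hH : IsWalkCocycle T H) :
    ∀ᵐ x ∂μ, ∀ i : ℤ, (∀ n : ℕ, 0 < n → H x (i + n) ≠ H x i) →
      Tendsto (H x) atTop atTop ∨ Tendsto (H x) atTop atBot := by
  filter_upwards [hT.ae_forall_zpow (ae_tendsto_of_forall_ne hT hH)] with x hx i hi
  have hshift : H ((T.toEquiv ^ i) x) = fun k => H x (i + k) - H x i :=
    funext (hH.zpow_apply i x)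
  have := hx i
  rw [hshift, Int.tendsto_add_sub_iff i (H x i) (.inl rfl) (.inl rfl),
    Int.tendsto_add_sub_iff i (H x i) (.inl rfl) (.inr rfl)] at this
  exact this fun n hn => sub_ne_zero.2 (hi n hn)

theorem ae_not_tendsto_atTop_and_atBot_atTop (hT : MeasurePreserving T μ μ)
    (hH : IsWalkCocycle T H) :
    ∀ᵐ x ∂μ, ¬(Tendsto (H x) atTop atTop ∧ Tendsto (H x) atBot atTop) := by
  set Y := {x | (∀ n : ℕ, 0 < n → 0 < H x n) ∧ ∀ n : ℕ, 0 < n → 0 ≤ H x (-n)}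
  have hY : MeasurableSet Y := by
    have := hH.measurable
    measurability
  -- a point of `Y` sits at the last time its walk attains its minimum, so its orbit never returns
  have hY0 : μ Y = 0 := by
    refine measure_mono_null (fun x hx => ?_)
      (hT.conservative.measure_mem_forall_ge_image_notMem_eq_zero hY.nullMeasurableSet 1)
    refine ⟨hx, fun m hm hmY => ?_⟩
    have h₁ := hx.1 m hm
    have h₂ := hmY.2 m hm
    rw [hH.iterate_apply, add_neg_cancel, hH.apply_zero] at h₂
    omega
  refine measure_eq_zero_iff_ae_notMem.1 (measure_mono_null (fun x hx => ?_)
    (measure_iUnion_null fun i : ℤ => (hT.zpow i).quasiMeasurePreserving.preimage_null hY0))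
  obtain ⟨htop, hbot⟩ := hx
  obtain ⟨a, ha⟩ := (continuous_of_discreteTopology (f := H x)).exists_forall_le
    (by rw [cocompact_eq_atBot_atTop]; exact tendsto_sup.2 ⟨hbot, htop⟩)
  obtain ⟨i, -, hia, hi⟩ := Int.exists_forall_lt_of_tendsto_atTop htop a
  refine Set.mem_iUnion.2 ⟨i, ⟨fun n hn => ?_, fun n _ => ?_⟩⟩ <;>
    simp only [hH.zpow_apply, sub_pos, sub_nonneg]
  · exact hi _ (by omega)
  · exact hia.trans (ha _)

theorem measure_inter_forall_ne_eq (hT : MeasurePreserving T μ μ) (hH : IsWalkCocycle T H)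
    {C : Set X} (hC : MeasurableSet C) (hCT : T ⁻¹' C = C) :
    μ (C ∩ {x | ∀ n : ℕ, 0 < n → H x n ≠ 0}) = μ (C ∩ {x | ∀ n : ℕ, 0 < n → H x (-n) ≠ 0}) := by
  have hHm := hH.measurable
  have hfirst : ∀ n, μ (C ∩ {x | IsFirstZero (fun j : ℕ => H x j) n}) =
      μ (C ∩ {x | IsFirstZero (fun j : ℕ => H x (-j)) n}) := by
    intro n
    have hpre : T^[n] ⁻¹' (C ∩ {x | IsFirstZero (fun j : ℕ => H x (-j)) n}) =
        C ∩ {x | IsFirstZero (fun j : ℕ => H x j) n} := by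
      rw [Set.preimage_inter, Function.IsFixedPt.preimage_iterate hCT n]
      ext x
      simp only [Set.mem_inter_iff, Set.mem_preimage, Set.mem_ofPred_eq, hH.iterate_apply,
        isFirstZero_reverse_iff (hH.apply_zero x)]
    rw [← hpre, (hT.iterate n).measure_preimage (by simp only [IsFirstZero]; measurability)]
  have hcompl : ∀ s : X → ℕ → ℤ, C ∩ {x | ∀ n, 0 < n → s x n ≠ 0} =
      C \ (C ∩ {x | ∃ n, 0 < n ∧ s x n = 0}) := by
    intro s
    ext x
    simp only [Set.mem_inter_iff, Set.mem_sdiff, Set.mem_ofPred_eq]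
    grind
  rw [hcompl (fun x n => H x n), hcompl (fun x n => H x (-n)),
    measure_sdiff Set.inter_subset_left (by measurability) (measure_ne_top _ _),
    measure_sdiff Set.inter_subset_left (by measurability) (measure_ne_top _ _),
    measure_inter_exists_eq_tsum (fun n => hHm n) hC,
    measure_inter_exists_eq_tsum (fun n => hHm (-n)) hC, tsum_congr hfirst]

theorem ae_tendsto_atBot_of_tendsto_atTop (hT : MeasurePreserving T μ μ)
    (hH : IsWalkCocycle T H) :
    ∀ᵐ x ∂μ, Tendsto (H x) atTop atTop → Tendsto (H x) atBot atBot := by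
  set C := {x | Tendsto (H x) atTop atTop} \ {x | Tendsto (H x) atBot atBot}
  have hC : MeasurableSet C :=
    (measurableSet_tendsto _ hH.measurable).diff (measurableSet_tendsto _ hH.measurable)
  have hCT : T ⁻¹' C = C := by
    ext x
    have hTx : H (T x) = fun k => H x (1 + k) - H x 1 :=
      funext fun k => by rw [hH.map_apply, add_comm]
    simp only [C, Set.mem_preimage, Set.mem_sdiff, Set.mem_ofPred_eq, hTx,
      Int.tendsto_add_sub_iff 1 (H x 1) (.inl rfl) (.inl rfl),
      Int.tendsto_add_sub_iff 1 (H x 1) (.inr rfl) (.inr rfl)]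
  -- a point of `C` that never returns to its level in the past tends to `+∞` at both ends
  have hpast : μ (C ∩ {x | ∀ n : ℕ, 0 < n → H x (-n) ≠ 0}) = 0 := by
    refine measure_eq_zero_iff_ae_notMem.2 ?_
    filter_upwards [ae_tendsto_of_forall_ne (hT.symm T) hH.reverse,
      ae_not_tendsto_atTop_and_atBot_atTop hT hH] with x hrev hboth ⟨⟨htop, hbot⟩, hne⟩
    simp only [tendsto_comp_neg_atTop_iff] at hrev
    rcases hrev hne with h | h
    · exact hboth ⟨htop, h⟩
    · exact hbot h
  have hfuture : μ (C ∩ {x | ∀ n : ℕ, 0 < n → H x n ≠ 0}) = 0 :=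
    (measure_inter_forall_ne_eq hT hH hC hCT).trans hpast
  -- every orbit in `C` passes through a last visit to some level
  refine ae_iff.2 (measure_mono_null (fun x hx => ?_)
    (measure_iUnion_null fun n : ℕ => (hT.iterate n).quasiMeasurePreserving.preimage_null hfuture))
  simp only [Set.mem_ofPred_eq, Classical.not_imp] at hx
  obtain ⟨i, hi0, -, hi⟩ := Int.exists_forall_lt_of_tendsto_atTop hx.1 0
  refine Set.mem_iUnion.2 ⟨i.toNat, ?_, fun n hn => ?_⟩
  · rw [← Set.mem_preimage, Function.IsFixedPt.preimage_iterate hCT]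
    exact hx
  · rw [hH.iterate_apply, Int.toNat_of_nonneg hi0, sub_ne_zero]
    exact (hi _ (by omega)).ne'

theorem ae_tendsto_of_exists_forall_ne (hT : MeasurePreserving T μ μ) (hH : IsWalkCocycle T H) :
    ∀ᵐ x ∂μ, (∃ i : ℤ, ∀ n : ℕ, 0 < n → H x (i + n) ≠ H x i) →
      (Tendsto (H x) atTop atTop ∧ Tendsto (H x) atBot atBot) ∨
        (Tendsto (H x) atTop atBot ∧ Tendsto (H x) atBot atTop) := by
  filter_upwards [ae_forall_tendsto_of_forall_ne hT hH, ae_tendsto_atBot_of_tendsto_atTop hT hH,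
    ae_tendsto_atBot_of_tendsto_atTop hT hH.neg] with x hF hup hdown ⟨i, hi⟩
  simp only [tendsto_neg_atTop_iff, tendsto_neg_atBot_iff] at hdown
  rcases hF i hi with h | h
  · exact .inl ⟨h, hup h⟩
  · exact .inr ⟨h, hdown h⟩

theorem ae_returns_or_tendsto (hT : MeasurePreserving T μ μ) (hH : IsWalkCocycle T H) :
    ∀ᵐ x ∂μ, (∀ i : ℤ, (∃ n : ℕ, 0 < n ∧ H x (i + n) = H x i) ∧
        (∃ n : ℕ, 0 < n ∧ H x (i - n) = H x i)) ∨
      (Tendsto (H x) atTop atTop ∧ Tendsto (H x) atBot atBot) ∨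
        (Tendsto (H x) atTop atBot ∧ Tendsto (H x) atBot atTop) := by
  filter_upwards [ae_tendsto_of_exists_forall_ne hT hH,
    ae_tendsto_of_exists_forall_ne (hT.symm T) hH.reverse] with x hfwd hbwd
  simp only [tendsto_comp_neg_atTop_iff, tendsto_comp_neg_atBot_iff, neg_add,
    ← sub_eq_add_neg] at hbwd
  by_cases hret : ∀ i : ℤ, (∃ n : ℕ, 0 < n ∧ H x (i + n) = H x i) ∧
      (∃ n : ℕ, 0 < n ∧ H x (i - n) = H x i)
  · exact .inl hret
  push Not at hret
  obtain ⟨i, hi⟩ := hret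
  by_cases hf : ∃ n : ℕ, 0 < n ∧ H x (i + n) = H x i
  · rcases hbwd ⟨-i, by simpa using hi hf⟩ with ⟨h₁, h₂⟩ | ⟨h₁, h₂⟩
    · exact .inr (.inr ⟨h₂, h₁⟩)
    · exact .inr (.inl ⟨h₂, h₁⟩)
  · push Not at hf
    exact .inr (hfwd ⟨i, hf⟩)

end IsWalkCocycle

end

section DyckMotzkin

variable {M N : ℕ}

theorem wordAt_shiftInv (x : ℤ → DMSym M N) (j k : ℤ) :
    wordAt (shiftInv x) j k = wordAt x (j - 1) (k - 1) := by
  simp only [wordAt, shiftInv]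
  rw [show (k - 1 + 1 - (j - 1) : ℤ) = k + 1 - j by ring]
  exact List.map_congr_left fun n _ => by rw [show (j + n - 1 : ℤ) = j - 1 + n by ring]

theorem shiftInv_mem_SigmaD {x : ℤ → DMSym M N} (hx : x ∈ SigmaD M N) :
    shiftInv x ∈ SigmaD M N := by
  intro j k hjk
  rw [wordAt_shiftInv]
  exact hx (j - 1) (k - 1) (by omega)

variable (M N) in
def shiftEquiv : ↥(SigmaD M N) ≃ᵐ ↥(SigmaD M N) where
  toFun := shiftD M N
  invFun x := ⟨shiftInv x.val, shiftInv_mem_SigmaD x.property⟩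
  left_inv x := Subtype.ext <| funext fun i => congrArg x.val (sub_add_cancel i 1)
  right_inv x := Subtype.ext <| funext fun i => congrArg x.val (add_sub_cancel_right i 1)
  measurable_toFun := Measurable.subtype_mk (f := fun x : ↥(SigmaD M N) => shift x.val) <|
    measurable_pi_lambda _ fun i => (measurable_pi_apply (i + 1)).comp measurable_subtype_coe
  measurable_invFun := Measurable.subtype_mk (f := fun x : ↥(SigmaD M N) => shiftInv x.val) <|
    measurable_pi_lambda _ fun i => (measurable_pi_apply (i - 1)).comp measurable_subtype_coe

theorem coe_shiftEquiv_apply (x : ↥(SigmaD M N)) : (shiftEquiv M N x).val = shift x.val := rfl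

theorem abs_Gfun_le_one (x : ℤ → DMSym M N) (k : ℤ) : |Gfun x k| ≤ 1 := by
  cases hxk : x k <;> simp [Gfun, hxk]

theorem Hfun_natCast (x : ℤ → DMSym M N) (n : ℕ) :
    Hfun x n = ∑ j ∈ Finset.range n, Gfun x j := by
  simp [Hfun]

theorem Hfun_neg_natCast (x : ℤ → DMSym M N) (n : ℕ) :
    Hfun x (-n) = -∑ j ∈ Finset.range n, Gfun x (-n + j) := by
  rcases n.eq_zero_or_pos with rfl | hn
  · simp [Hfun]
  · simp [Hfun, hn.ne']

theorem Hfun_add_one (x : ℤ → DMSym M N) (k : ℤ) : Hfun x (k + 1) = Hfun x k + Gfun x k := by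
  obtain ⟨n, rfl | rfl⟩ := Int.eq_nat_or_neg k
  · rw [← Nat.cast_succ, Hfun_natCast, Hfun_natCast, Finset.sum_range_succ]
  · rcases n with _ | n
    · simp [Hfun]
    · rw [show -((n + 1 : ℕ) : ℤ) + 1 = -n by push_cast; ring, Hfun_neg_natCast, Hfun_neg_natCast,
        Finset.sum_range_succ']
      push_cast
      ring_nf

theorem Hfun_shift (x : ℤ → DMSym M N) (k : ℤ) :
    Hfun (shift x) k = Hfun x (k + 1) - Hfun x 1 := by
  have hG : ∀ j, Gfun (shift x) j = Gfun x (j + 1) := fun j => rfl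
  induction k using Int.induction_on with
  | zero => simp [Hfun]
  | succ k ih => rw [Hfun_add_one, ih, hG, Hfun_add_one x (k + 1)]; ring
  | pred k ih =>
    have h₁ := Hfun_add_one (shift x) (-k - 1)
    have h₂ := Hfun_add_one x (-k)
    simp only [sub_add_cancel, hG] at h₁
    rw [sub_add_cancel]
    linarith

theorem measurable_Hfun (k : ℤ) : Measurable fun x : ↥(SigmaD M N) => Hfun x.val k := by
  have hG : ∀ j, Measurable fun x : ↥(SigmaD M N) => Gfun x.val j := fun j =>
    -- `Gfun x j` only depends on `x j`
    (measurable_from_top (f := fun s : DMSym M N => Gfun (fun _ => s) 0)).comp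
      ((measurable_pi_apply j).comp measurable_subtype_coe)
  induction k using Int.induction_on with
  | zero => simp [Hfun]
  | succ k ih =>
    simp only [Hfun_add_one]
    exact ih.add (hG k)
  | pred k ih =>
    have h : ∀ x : ↥(SigmaD M N), Hfun x.val (-k - 1) = Hfun x.val (-k) - Gfun x.val (-k - 1) :=
      fun x => by rw [← sub_add_cancel (-(k : ℤ)) 1, Hfun_add_one, sub_add_cancel]; ring
    simp only [h]
    exact ih.sub (hG _)

variable (M N) in
theorem isWalkCocycle_Hfun : IsWalkCocycle (shiftEquiv M N) fun x k => Hfun x.val k where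
  apply_zero x := by simp [Hfun]
  abs_sub_le_one x k := by rw [Hfun_add_one, add_sub_cancel_left]; exact abs_Gfun_le_one _ k
  map_apply x k := by rw [coe_shiftEquiv_apply, Hfun_shift]
  measurable := measurable_Hfun

end DyckMotzkin

theorem invariant_full_measure_union_general (M N : ℕ)
    (μ : ProbabilityMeasure ↥(SigmaD M N)) (hμ : μ ∈ MinvD M N) :
    μ.toMeasure (Subtype.val ⁻¹' (A0set M N ∪ AalphaSet M N ∪ AbetaSet M N)) = 1 := by
  have hT : MeasurePreserving (shiftEquiv M N) μ.toMeasure μ.toMeasure := hμ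
  refine (measure_congr (ae_eq_univ.2 (ae_iff.1 ?_))).trans measure_univ
  filter_upwards [(isWalkCocycle_Hfun M N).ae_returns_or_tendsto hT] with x hx
  rcases hx with h | h | h
  · exact .inl (.inl ⟨x.2, h⟩)
  · exact .inl (.inr ⟨x.2, h⟩)
  · exact .inr ⟨x.2, h⟩

/-- Every shift-invariant Borel probability measure on `Σ_D` gives full measure to
`A_0 ∪ A_α ∪ A_β`. -/
theorem invariant_full_measure_union (M N : ℕ) (hM : 2 ≤ M)
    (μ : ProbabilityMeasure ↥(SigmaD M N)) (hμ : μ ∈ MinvD M N) :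
    μ.toMeasure (Subtype.val ⁻¹' (A0set M N ∪ AalphaSet M N ∪ AbetaSet M N)) = 1 :=
  invariant_full_measure_union_general M N μ hμ
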